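/- Let f and g be coprime integer polynomials of positive degree, deg(f) = m, deg(g) = n, and d = gcd(L(f), L(g)). Then |Res(f,g)| divides d^{m+n-1} · B(f,g)^{max(m,n)}. -/

import Mathlib

open Polynomial

/-- The Sylvester matrix of two integer polynomials. -/
noncomputable def sylvesterMatrix (f g : Polynomial ℤ) :
    Matrix (Fin (g.natDegree + f.natDegree)) (Fin (g.natDegree + f.natDegree)) ℤ :=
  Matrix.of fun i j =>
    if (i : ℕ) < g.natDegree then
      if (i : ℕ) ≤ (j : ℕ) ∧ (j : ℕ) ≤ (i : ℕ) + f.natDegree then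
        f.coeff (f.natDegree + i - j)
      else 0
    else
      if (i : ℕ) - g.natDegree ≤ (j : ℕ) ∧ (j : ℕ) ≤ (i : ℕ) - g.natDegree + g.natDegree then
        g.coeff (g.natDegree + ((i : ℕ) - g.natDegree) - j)
      else 0

/-- The resultant of two integer polynomials, as the determinant of their Sylvester matrix. -/
noncomputable def res (f g : Polynomial ℤ) : ℤ := (sylvesterMatrix f g).det

/-- `B` is a positive common denominator for the (unique) Bezout cofactors `p, q` in `ℚ[x]`
with `deg p < deg g`, `deg q < deg f` and `p*f + q*g = 1`, i.e. `B*p, B*q` lie in `ℤ[x]`. -/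
def IsBezoutDenom (f g : Polynomial ℤ) (B : ℤ) : Prop :=
  0 < B ∧ ∃ p q : Polynomial ℚ,
    p.degree < (g.map (Int.castRingHom ℚ)).degree ∧
    q.degree < (f.map (Int.castRingHom ℚ)).degree ∧
    p * f.map (Int.castRingHom ℚ) + q * g.map (Int.castRingHom ℚ) = 1 ∧
    (∃ P : Polynomial ℤ, P.map (Int.castRingHom ℚ) = Polynomial.C (B : ℚ) * p) ∧
    (∃ Q : Polynomial ℤ, Q.map (Int.castRingHom ℚ) = Polynomial.C (B : ℚ) * q)

/-!
Mathlib's resultant is multiplicative in each argument and invariant under `f ↦ f + g * q` when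
the formal degrees allow it. Clearing denominators in the Bezout relation gives
`f * P + g * Q = B` in `ℤ[x]` with `deg P < n`, `deg Q < m`. Computing `Res(f * P + g * Q, g)`
with formal degree `m + n - 1` in two ways gives
`± L(g)^k * Res(f, g) * Res(P, g) = ± L(g)^(m + n - 1) * B^n`, so
`Res(f, g) ∣ L(g)^(m + n - 1) * B^n`; symmetrically `Res(f, g) ∣ L(f)^(m + n - 1) * B^m`.
Raising both powers of `B` to `B^max(m, n)`, `Res(f, g)` divides the gcd of the two bounds,
which is `d^(m + n - 1) * B^max(m, n)`.
-/

theorem sylvesterMatrix_apply_eq_sylvester (f g : ℤ[X]) (i j : Fin (g.natDegree + f.natDegree)) :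
    sylvesterMatrix f g i j = sylvester f g f.natDegree g.natDegree
      (Fin.rev (Fin.cast (add_comm _ _) j)) (Fin.rev (Fin.cast (add_comm _ _) i)) := by
  obtain ⟨i, hi⟩ := i
  obtain ⟨j, hj⟩ := j
  rcases lt_or_ge i g.natDegree with h | h
  · have hcol : Fin.rev (Fin.cast (add_comm _ _) ⟨i, hi⟩) =
        Fin.natAdd f.natDegree ⟨g.natDegree - 1 - i, by omega⟩ := by ext; simp; omega
    rw [hcol, sylvester, Matrix.of_apply, Fin.addCases_right]
    simp only [sylvesterMatrix, Matrix.of_apply, Fin.val_rev, Fin.val_cast, Set.mem_Icc, if_pos h]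
    split_ifs <;> first | (congr 1; omega) | omega
  · have hcol : Fin.rev (Fin.cast (add_comm _ _) ⟨i, hi⟩) =
        Fin.castAdd g.natDegree ⟨g.natDegree + f.natDegree - 1 - i, by omega⟩ := by
      ext; simp; omega
    rw [hcol, sylvester, Matrix.of_apply, Fin.addCases_left]
    simp only [sylvesterMatrix, Matrix.of_apply, Fin.val_rev, Fin.val_cast, Set.mem_Icc,
      if_neg h.not_gt]
    split_ifs <;> first | (congr 1; omega) | omega

theorem res_eq_resultant (f g : ℤ[X]) : res f g = resultant f g := by
  let e : Fin (g.natDegree + f.natDegree) ≃ Fin (f.natDegree + g.natDegree) :=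
    (finCongr (add_comm _ _)).trans Fin.revPerm
  have h : sylvesterMatrix f g =
      ((sylvester f g f.natDegree g.natDegree).submatrix e e).transpose :=
    Matrix.ext fun i j => sylvesterMatrix_apply_eq_sylvester f g i j
  rw [res, h, Matrix.det_transpose, Matrix.det_submatrix_equiv_self, resultant]

namespace Polynomial

variable {R : Type*} [CommRing R]

theorem resultant_dvd_leadingCoeff_right_pow_mul_pow {f g p q : R[X]} {b : R}
    (hp : p.natDegree < g.natDegree) (hq : q.natDegree < f.natDegree)
    (h : f * p + g * q = C b) :
    resultant f g ∣ g.leadingCoeff ^ (f.natDegree + g.natDegree - 1) * b ^ g.natDegree := by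
  set m := f.natDegree
  set n := g.natDegree
  set k := n - 1 - p.natDegree
  have hdeg : m + p.natDegree + k = m + n - 1 := by omega
  have key : resultant (C b) g (m + n - 1) n =
      (-1) ^ (n * k) * g.coeff n ^ k * (resultant f g * resultant p g p.natDegree n) := by
    rw [← h, resultant_add_mul_left _ _ _ _ _ (by omega) le_rfl, ← hdeg,
      resultant_add_left_deg _ _ _ _ _ natDegree_mul_le, resultant_mul_left _ _ _ _ le_rfl]
  rw [resultant_C_left, ← leadingCoeff, mul_assoc] at key
  rw [← (isUnit_neg_one.pow _).dvd_mul_left, key]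
  exact (dvd_mul_right _ _).mul_left _

theorem resultant_dvd_leadingCoeff_left_pow_mul_pow {f g p q : R[X]} {b : R}
    (hp : p.natDegree < g.natDegree) (hq : q.natDegree < f.natDegree)
    (h : f * p + g * q = C b) :
    resultant f g ∣ f.leadingCoeff ^ (f.natDegree + g.natDegree - 1) * b ^ f.natDegree := by
  rw [resultant_comm, add_comm f.natDegree]
  exact (isUnit_neg_one.pow _).mul_left_dvd.mpr
    (resultant_dvd_leadingCoeff_right_pow_mul_pow hq hp (by rw [← h, add_comm]))

end Polynomial

theorem Int.dvd_gcd_pow_mul_pow_max {a x y b : ℤ} {s m n : ℕ}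
    (hx : a ∣ x ^ s * b ^ m) (hy : a ∣ y ^ s * b ^ n) :
    a ∣ (Int.gcd x y : ℤ) ^ s * b ^ max m n := by
  have hx' := hx.trans (mul_dvd_mul_left _ (pow_dvd_pow b (le_max_left m n)))
  have hy' := hy.trans (mul_dvd_mul_left _ (pow_dvd_pow b (le_max_right m n)))
  have h := Int.dvd_coe_gcd hx' hy'
  rw [Int.gcd_mul_right, Int.pow_gcd_pow, Nat.cast_mul, Nat.cast_pow, Int.natCast_natAbs] at h
  exact h.trans (mul_dvd_mul_left _ (abs_dvd_self _))

theorem natDegree_lt_of_map_eq_C_mul {P : ℤ[X]} {p : ℚ[X]} {g : ℤ[X]} {B : ℤ}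
    (hg : 0 < g.natDegree) (hp : p.degree < (g.map (Int.castRingHom ℚ)).degree)
    (hP : P.map (Int.castRingHom ℚ) = C (B : ℚ) * p) : P.natDegree < g.natDegree := by
  have hmap : ∀ F : ℤ[X], (F.map (Int.castRingHom ℚ)).natDegree = F.natDegree :=
    natDegree_map_eq_of_injective (RingHom.injective_int _)
  rcases eq_or_ne p 0 with rfl | hp0
  · rw [← hmap, hP, mul_zero, natDegree_zero]; exact hg
  calc P.natDegree = (C (B : ℚ) * p).natDegree := by rw [← hP, hmap]
    _ ≤ p.natDegree := natDegree_C_mul_le _ _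
    _ < g.natDegree := hmap g ▸ natDegree_lt_natDegree hp0 hp

theorem IsBezoutDenom.exists_mul_add_mul_eq_C {f g : ℤ[X]} {B : ℤ} (hB : IsBezoutDenom f g B)
    (hf : 0 < f.natDegree) (hg : 0 < g.natDegree) :
    ∃ P Q : ℤ[X],
      P.natDegree < g.natDegree ∧ Q.natDegree < f.natDegree ∧ f * P + g * Q = C B := by
  obtain ⟨-, p, q, hp, hq, hpq, ⟨P, hP⟩, ⟨Q, hQ⟩⟩ := hB
  refine ⟨P, Q, natDegree_lt_of_map_eq_C_mul hg hp hP,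
    natDegree_lt_of_map_eq_C_mul hf hq hQ, ?_⟩
  apply map_injective _ (RingHom.injective_int (Int.castRingHom ℚ))
  rw [Polynomial.map_add, Polynomial.map_mul, Polynomial.map_mul, hP, hQ, map_C, eq_intCast]
  linear_combination C (B : ℚ) * hpq

theorem statement_16_general (f g : Polynomial ℤ)
    (hf : 0 < f.natDegree) (hg : 0 < g.natDegree)
    (B : ℤ) (hB : IsBezoutDenom f g B) :
    |res f g| ∣
      (Int.gcd f.leadingCoeff g.leadingCoeff : ℤ) ^ (f.natDegree + g.natDegree - 1) * B ^ max f.natDegree g.natDegree := by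
  obtain ⟨P, Q, hP, hQ, h⟩ := hB.exists_mul_add_mul_eq_C hf hg
  rw [abs_dvd, res_eq_resultant]
  exact Int.dvd_gcd_pow_mul_pow_max (resultant_dvd_leadingCoeff_left_pow_mul_pow hP hQ h)
    (resultant_dvd_leadingCoeff_right_pow_mul_pow hP hQ h)

theorem statement_16 (f g : Polynomial ℤ)
    (hf : 0 < f.natDegree) (hg : 0 < g.natDegree)
    (hcop : IsCoprime (f.map (Int.castRingHom ℚ)) (g.map (Int.castRingHom ℚ)))
    (B : ℤ) (hB : IsBezoutDenom f g B)
    (hBmin : ∀ B' : ℤ, IsBezoutDenom f g B' → B ≤ B') :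
    |res f g| ∣
      (Int.gcd f.leadingCoeff g.leadingCoeff : ℤ) ^ (f.natDegree + g.natDegree - 1) * B ^ max f.natDegree g.natDegree :=
  statement_16_general f g hf hg B hB
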